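/- arXiv:1905.05857 — 10 statements merged into one kernel-verified Lean document; each statement's English description precedes it below -/
import Mathlib

section
/- Let S be a finite nonempty set and T a natural number. Let s₁, …, s_T be any sequence of elements of S. For each t = 1, …, T let r_t : S → ℝ and let p_t : S → S → ℝ be a transition matrix, and let r' : S → ℝ and a transition matrix p' : S → S → ℝ be fixed. Suppose ρ ∈ ℝ and λ : S → ℝ satisfy the Poisson equation ρ − r'(s) = Σ_{s'} p'(s,s')·λ(s') − λ(s) for all s ∈ S, and set Λ := max_s λ(s) − min_s λ(s). Suppose Δʳ_t : S → ℝ and Δᵖ_t : S → ℝ satisfy |r_t(s) − r'(s)| ≤ Δʳ_t(s) and Σ_{s'} |p_t(s,s') − p'(s,s')| ≤ Δᵖ_t(s) for all s and all t = 1, …, T. Then T·ρ − Σ_{t=1}^T r_t(s_t) ≤ Σ_{t=1}^T ( Λ·Δᵖ_t(s_t) + Δʳ_t(s_t) ) + Σ_{t=1}^T ( Σ_{s'} p_t(s_t,s')·λ(s') − λ(s_t) ). -/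
/-- Perturbation bound: executing on a changing MDP a policy that is optimal (satisfies
the Poisson equation) for a fixed comparator MDP. Indices `t = 1, …, T`. -/
theorem perturbation_bound_trajectory
    {S : Type*} [Fintype S] [Nonempty S] (T : ℕ)
    (s : ℕ → S)
    (r : ℕ → S → ℝ) (p : ℕ → S → S → ℝ)
    (r' : S → ℝ) (p' : S → S → ℝ)
    (hp0 : ∀ t ∈ Finset.Icc 1 T, ∀ x x', 0 ≤ p t x x')
    (hp1 : ∀ t ∈ Finset.Icc 1 T, ∀ x, ∑ x', p t x x' = 1)
    (hp'0 : ∀ x x', 0 ≤ p' x x') (hp'1 : ∀ x, ∑ x', p' x x' = 1)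
    (ρ : ℝ) (lam : S → ℝ)
    (hPoisson : ∀ x, ρ - r' x = (∑ x', p' x x' * lam x') - lam x)
    (Δr Δp : ℕ → S → ℝ)
    (hΔr : ∀ t ∈ Finset.Icc 1 T, ∀ x, |r t x - r' x| ≤ Δr t x)
    (hΔp : ∀ t ∈ Finset.Icc 1 T, ∀ x, (∑ x', |p t x x' - p' x x'|) ≤ Δp t x) :
    (T : ℝ) * ρ - ∑ t ∈ Finset.Icc 1 T, r t (s t) ≤
      (∑ t ∈ Finset.Icc 1 T,
        ((Finset.univ.sup' Finset.univ_nonempty lam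
            - Finset.univ.inf' Finset.univ_nonempty lam) * Δp t (s t) + Δr t (s t)))
      + ∑ t ∈ Finset.Icc 1 T,
          ((∑ x', p t (s t) x' * lam x') - lam (s t)) := by
  set M := Finset.univ.sup' Finset.univ_nonempty lam with hM
  set m := Finset.univ.inf' Finset.univ_nonempty lam with hm
  have hmle : ∀ x : S, m ≤ lam x := fun x => Finset.inf'_le _ (Finset.mem_univ x)
  have hleM : ∀ x : S, lam x ≤ M := fun x => Finset.le_sup' _ (Finset.mem_univ x)
  have hmM : m ≤ M := le_trans (hmle (Classical.arbitrary S)) (hleM _)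
  have key : ∀ t ∈ Finset.Icc 1 T,
      ρ - r t (s t) ≤ ((M - m) * Δp t (s t) + Δr t (s t))
        + ((∑ x', p t (s t) x' * lam x') - lam (s t)) := by
    intro t ht
    have hP := hPoisson (s t)
    have h1 : (∑ x', p' (s t) x' * lam x') - (∑ x', p t (s t) x' * lam x')
        = ∑ x', (p' (s t) x' - p t (s t) x') * (lam x' - m) := by
      have e1 : ∑ x', (p' (s t) x' - p t (s t) x') * (lam x' - m)
          = ((∑ x', p' (s t) x' * lam x') - (∑ x', p t (s t) x' * lam x'))
            - m * ((∑ x', p' (s t) x') - (∑ x', p t (s t) x')) := by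
        simp only [sub_mul, mul_sub, Finset.sum_sub_distrib, Finset.mul_sum, Finset.sum_mul,
          mul_comm m]
      rw [e1, hp'1, hp1 t ht]
      ring
    have h2 : (∑ x', (p' (s t) x' - p t (s t) x') * (lam x' - m))
        ≤ (M - m) * Δp t (s t) := by
      have hterm : ∀ x' : S, (p' (s t) x' - p t (s t) x') * (lam x' - m)
          ≤ |p t (s t) x' - p' (s t) x'| * (M - m) := by
        intro x'
        have h01 : 0 ≤ lam x' - m := sub_nonneg.mpr (hmle x')
        have h02 : lam x' - m ≤ M - m := by linarith [hleM x']
        have habs : p' (s t) x' - p t (s t) x' ≤ |p t (s t) x' - p' (s t) x'| := by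
          rw [abs_sub_comm]; exact le_abs_self _
        calc (p' (s t) x' - p t (s t) x') * (lam x' - m)
            ≤ |p t (s t) x' - p' (s t) x'| * (lam x' - m) :=
              mul_le_mul_of_nonneg_right habs h01
          _ ≤ |p t (s t) x' - p' (s t) x'| * (M - m) :=
              mul_le_mul_of_nonneg_left h02 (abs_nonneg _)
      calc (∑ x', (p' (s t) x' - p t (s t) x') * (lam x' - m))
          ≤ ∑ x', |p t (s t) x' - p' (s t) x'| * (M - m) :=
            Finset.sum_le_sum fun x' _ => hterm x'
        _ = (∑ x', |p t (s t) x' - p' (s t) x'|) * (M - m) := by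
            rw [Finset.sum_mul]
        _ ≤ Δp t (s t) * (M - m) := by
            apply mul_le_mul_of_nonneg_right (hΔp t ht (s t)) (by linarith)
        _ = (M - m) * Δp t (s t) := by ring
    have h3 : r' (s t) - r t (s t) ≤ Δr t (s t) := by
      have := hΔr t ht (s t)
      have h4 : r' (s t) - r t (s t) ≤ |r t (s t) - r' (s t)| := by
        rw [abs_sub_comm]; exact le_abs_self _
      linarith
    have := h1 ▸ h2
    linarith
  have hcard : (Finset.Icc 1 T).card = T := by simp
  calc (T : ℝ) * ρ - ∑ t ∈ Finset.Icc 1 T, r t (s t)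
      = ∑ t ∈ Finset.Icc 1 T, (ρ - r t (s t)) := by
        rw [Finset.sum_sub_distrib, Finset.sum_const, hcard, nsmul_eq_mul]
    _ ≤ ∑ t ∈ Finset.Icc 1 T, (((M - m) * Δp t (s t) + Δr t (s t))
          + ((∑ x', p t (s t) x' * lam x') - lam (s t))) :=
        Finset.sum_le_sum key
    _ = _ := Finset.sum_add_distrib
end

section
/- Let S be a finite nonempty set, let r, r' : S → ℝ, and let p, p' : S → S → ℝ be transition matrices. Let Δʳ, Δᵖ ≥ 0 be reals with |r(s) − r'(s)| ≤ Δʳ and Σ_{s'} |p(s,s') − p'(s,s')| ≤ Δᵖ for all s ∈ S. Suppose ρ' ∈ ℝ and λ' : S → ℝ satisfy the Poisson equation ρ' − r'(s) = Σ_{s'} p'(s,s')·λ'(s') − λ'(s) for all s, and set Λ' := max_s λ'(s) − min_s λ'(s). If μ : S → ℝ is a stationary distribution of p, then ρ' − Σ_{s} μ(s)·r(s) ≤ Λ'·Δᵖ + Δʳ. -/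
/-- Perturbation bound in terms of a stationary distribution: if `(ρ', λ')` solves the
Poisson equation for `(r', p')` and `(r, p)` is `(Δʳ, Δᵖ)`-close to `(r', p')`, then for
any stationary distribution `μ` of `p`, `ρ' − Σ_s μ s · r s ≤ Λ'·Δᵖ + Δʳ`. -/
theorem perturbation_bound_stationary
    {S : Type*} [Fintype S] [Nonempty S]
    (r r' : S → ℝ) (p p' : S → S → ℝ)
    (hp0 : ∀ x x', 0 ≤ p x x') (hp1 : ∀ x, ∑ x', p x x' = 1)
    (hp'0 : ∀ x x', 0 ≤ p' x x') (hp'1 : ∀ x, ∑ x', p' x x' = 1)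
    (Δr Δp : ℝ) (hΔr0 : 0 ≤ Δr) (hΔp0 : 0 ≤ Δp)
    (hr : ∀ x, |r x - r' x| ≤ Δr)
    (hp : ∀ x, (∑ x', |p x x' - p' x x'|) ≤ Δp)
    (ρ' : ℝ) (lam' : S → ℝ)
    (hPoisson : ∀ x, ρ' - r' x = (∑ x', p' x x' * lam' x') - lam' x)
    (μ : S → ℝ) (hμ0 : ∀ x, 0 ≤ μ x) (hμ1 : ∑ x, μ x = 1)
    (hstat : ∀ x', ∑ x, μ x * p x x' = μ x') :
    ρ' - ∑ x, μ x * r x ≤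
      (Finset.univ.sup' Finset.univ_nonempty lam'
        - Finset.univ.inf' Finset.univ_nonempty lam') * Δp + Δr := by
  set M := Finset.univ.sup' Finset.univ_nonempty lam' with hMdef
  set m := Finset.univ.inf' Finset.univ_nonempty lam' with hmdef
  have hmM : m ≤ M := by
    obtain ⟨s⟩ := ‹Nonempty S›
    exact le_trans (Finset.inf'_le _ (Finset.mem_univ s))
      (Finset.le_sup' _ (Finset.mem_univ s))
  -- pointwise bound on the perturbation term
  have key : ∀ s, (∑ s', (p' s s' - p s s') * lam' s') ≤ (M - m) * Δp := by
    intro s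
    have h0 : ∑ s', (p' s s' - p s s') = (0 : ℝ) := by
      rw [Finset.sum_sub_distrib, hp1, hp'1]; ring
    have hrw : (∑ s', (p' s s' - p s s') * lam' s')
        = ∑ s', (p' s s' - p s s') * (lam' s' - m) := by
      simp_rw [mul_sub]
      rw [Finset.sum_sub_distrib, ← Finset.sum_mul, h0]
      ring
    rw [hrw]
    calc ∑ s', (p' s s' - p s s') * (lam' s' - m)
        ≤ ∑ s', |p' s s' - p s s'| * (M - m) := by
          apply Finset.sum_le_sum
          intro x _
          have h1 : 0 ≤ lam' x - m :=
            sub_nonneg.2 (Finset.inf'_le _ (Finset.mem_univ x))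
          have h2 : lam' x - m ≤ M - m := by
            have := Finset.le_sup' lam' (Finset.mem_univ x)
            simp only [← hMdef] at this
            linarith
          calc (p' s x - p s x) * (lam' x - m)
              ≤ |p' s x - p s x| * (lam' x - m) :=
                mul_le_mul_of_nonneg_right (le_abs_self _) h1
            _ ≤ |p' s x - p s x| * (M - m) :=
                mul_le_mul_of_nonneg_left h2 (abs_nonneg _)
      _ = (∑ s', |p s s' - p' s s'|) * (M - m) := by
          rw [Finset.sum_mul]
          refine Finset.sum_congr rfl fun x _ => ?_
          rw [abs_sub_comm]
      _ ≤ Δp * (M - m) :=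
          mul_le_mul_of_nonneg_right (hp s) (by linarith)
      _ = (M - m) * Δp := mul_comm _ _
  -- stationarity swap
  have hswap : ∑ x, μ x * ∑ s', p x s' * lam' s' = ∑ x, μ x * lam' x := by
    simp_rw [Finset.mul_sum]
    rw [Finset.sum_comm]
    refine Finset.sum_congr rfl fun s' _ => ?_
    simp_rw [← mul_assoc]
    rw [← Finset.sum_mul, hstat s']
  -- decomposition
  have e0 : ρ' - ∑ x, μ x * r x = ∑ x, μ x * (ρ' - r x) := by
    simp_rw [mul_sub]
    rw [Finset.sum_sub_distrib, ← Finset.sum_mul, hμ1, one_mul]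
  have e1 : ∑ x, μ x * (ρ' - r x)
      = ∑ x, μ x * ((∑ s', p' x s' * lam' s') - lam' x)
        + ∑ x, μ x * (r' x - r x) := by
    rw [← Finset.sum_add_distrib]
    refine Finset.sum_congr rfl fun x _ => ?_
    rw [← mul_add]
    have := hPoisson x
    have h : ρ' - r x = ((∑ s', p' x s' * lam' s') - lam' x) + (r' x - r x) := by
      linarith
    rw [h]
  have e2 : ∑ x, μ x * ((∑ s', p' x s' * lam' s') - lam' x)
      = ∑ x, μ x * ∑ s', (p' x s' - p x s') * lam' s' := by
    have hsplit : ∀ x, (∑ s', (p' x s' - p x s') * lam' s')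
        = (∑ s', p' x s' * lam' s') - ∑ s', p x s' * lam' s' := by
      intro x
      rw [← Finset.sum_sub_distrib]
      refine Finset.sum_congr rfl fun s' _ => ?_
      ring
    simp_rw [hsplit, mul_sub]
    rw [Finset.sum_sub_distrib, Finset.sum_sub_distrib, hswap]
  -- bounds
  have b1 : ∑ x, μ x * ∑ s', (p' x s' - p x s') * lam' s' ≤ (M - m) * Δp := by
    calc ∑ x, μ x * ∑ s', (p' x s' - p x s') * lam' s'
        ≤ ∑ x, μ x * ((M - m) * Δp) := by
          apply Finset.sum_le_sum
          intro x _
          exact mul_le_mul_of_nonneg_left (key x) (hμ0 x)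
      _ = (M - m) * Δp := by rw [← Finset.sum_mul, hμ1, one_mul]
  have b2 : ∑ x, μ x * (r' x - r x) ≤ Δr := by
    calc ∑ x, μ x * (r' x - r x)
        ≤ ∑ x, μ x * Δr := by
          apply Finset.sum_le_sum
          intro x _
          refine mul_le_mul_of_nonneg_left ?_ (hμ0 x)
          have := hr x
          have := abs_le.1 (hr x)
          linarith [this.1]
      _ = Δr := by rw [← Finset.sum_mul, hμ1, one_mul]
  rw [e0, e1, e2]
  linarith
end

section
/- Let S and A be finite nonempty sets, let r : S × A → ℝ, and let p : S × A → S → ℝ be such that each p(s,a,·) is a probability vector. Suppose ρ ∈ ℝ and λ : S → ℝ satisfy the Bellman optimality equation ρ + λ(s) = max_{a∈A} ( r(s,a) + Σ_{s'} p(s,a,s')·λ(s') ) for all s ∈ S. Then for every policy π : S → A and every stationary distribution μ of the transition matrix (s,s') ↦ p(s,π(s),s'), we have Σ_{s} μ(s)·r(s,π(s)) ≤ ρ. -/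
/-- If `(ρ, λ)` satisfies the Bellman optimality equation for a finite MDP `(r, p)`,
then the long-run average reward `Σ_s μ s · r s (π s)` of any stationary policy `π`,
with `μ` a stationary distribution of the induced transition matrix, is at most `ρ`. -/
theorem gain_dominates_stationary_policy
    {S A : Type*} [Fintype S] [Nonempty S] [Fintype A] [Nonempty A]
    (r : S → A → ℝ) (p : S → A → S → ℝ)
    (hp0 : ∀ s a s', 0 ≤ p s a s') (hp1 : ∀ s a, ∑ s', p s a s' = 1)
    (ρ : ℝ) (lam : S → ℝ)
    (hBellman : ∀ s, ρ + lam s =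
      Finset.univ.sup' Finset.univ_nonempty
        (fun a => r s a + ∑ s', p s a s' * lam s'))
    (π : S → A)
    (μ : S → ℝ) (hμ0 : ∀ s, 0 ≤ μ s) (hμ1 : ∑ s, μ s = 1)
    (hstat : ∀ s', ∑ s, μ s * p s (π s) s' = μ s') :
    ∑ s, μ s * r s (π s) ≤ ρ := by
  have key : ∀ s, r s (π s) + ∑ s', p s (π s) s' * lam s' ≤ ρ + lam s := by
    intro s
    rw [hBellman s]
    exact Finset.le_sup' (fun a => r s a + ∑ s', p s a s' * lam s') (Finset.mem_univ (π s))
  have h1 : ∑ s, μ s * (r s (π s) + ∑ s', p s (π s) s' * lam s')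
      ≤ ∑ s, μ s * (ρ + lam s) := by
    apply Finset.sum_le_sum
    intro s _
    exact mul_le_mul_of_nonneg_left (key s) (hμ0 s)
  have h2 : ∑ s, μ s * (∑ s', p s (π s) s' * lam s') = ∑ s, μ s * lam s := by
    calc ∑ s, μ s * ∑ s', p s (π s) s' * lam s'
        = ∑ s, ∑ s', μ s * p s (π s) s' * lam s' := by
          simp [Finset.mul_sum, mul_assoc]
      _ = ∑ s', (∑ s, μ s * p s (π s) s') * lam s' := by
          rw [Finset.sum_comm]; simp [Finset.sum_mul]
      _ = ∑ s', μ s' * lam s' := by simp [hstat]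
  have h3 : ∑ s, μ s * (ρ + lam s) = ρ + ∑ s, μ s * lam s := by
    simp [mul_add, Finset.sum_add_distrib, ← Finset.sum_mul, hμ1]
  simp only [mul_add, Finset.sum_add_distrib] at h1
  rw [h2] at h1
  have h4 : ∑ x : S, μ x * ρ = ρ := by rw [← Finset.sum_mul, hμ1, one_mul]
  linarith
end

section
/- Let S and A be finite nonempty sets. Let r, r' : S × A → ℝ and let p, p' : S × A → S → ℝ be such that each p(s,a,·) and each p'(s,a,·) is a probability vector. Let Δʳ, Δᵖ ≥ 0 be reals with |r(s,a) − r'(s,a)| ≤ Δʳ and Σ_{s''} |p(s,a,s'') − p'(s,a,s'')| ≤ Δᵖ for all s, a. Suppose (ρ, λ) satisfies the Bellman optimality equation for (r, p), and (ρ', λ') satisfies the Bellman optimality equation for (r', p') with max_s λ'(s) − min_s λ'(s) ≤ D'. Then ρ' − ρ ≤ D'·Δᵖ + Δʳ. -/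
/-- Perturbation bound on the optimal average reward: if the rewards and transition
probabilities of two finite MDPs differ by at most `Δʳ` and `Δᵖ` respectively, and the
bias span of the second is at most `D'`, then `ρ' − ρ ≤ D'·Δᵖ + Δʳ`. -/
theorem optimal_gain_perturbation_bound
    {S A : Type*} [Fintype S] [Nonempty S] [Fintype A] [Nonempty A]
    (r r' : S → A → ℝ) (p p' : S → A → S → ℝ)
    (hp0 : ∀ s a s', 0 ≤ p s a s') (hp1 : ∀ s a, ∑ s', p s a s' = 1)
    (hp'0 : ∀ s a s', 0 ≤ p' s a s') (hp'1 : ∀ s a, ∑ s', p' s a s' = 1)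
    (Δr Δp : ℝ) (hΔr0 : 0 ≤ Δr) (hΔp0 : 0 ≤ Δp)
    (hr : ∀ s a, |r s a - r' s a| ≤ Δr)
    (hp : ∀ s a, (∑ s'', |p s a s'' - p' s a s''|) ≤ Δp)
    (ρ : ℝ) (lam : S → ℝ)
    (hBellman : ∀ s, ρ + lam s =
      Finset.univ.sup' Finset.univ_nonempty
        (fun a => r s a + ∑ s', p s a s' * lam s'))
    (ρ' : ℝ) (lam' : S → ℝ)
    (hBellman' : ∀ s, ρ' + lam' s =
      Finset.univ.sup' Finset.univ_nonempty
        (fun a => r' s a + ∑ s', p' s a s' * lam' s'))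
    (D' : ℝ)
    (hspan : Finset.univ.sup' Finset.univ_nonempty lam'
        - Finset.univ.inf' Finset.univ_nonempty lam' ≤ D') :
    ρ' - ρ ≤ D' * Δp + Δr := by
  classical
  -- pick s0 maximizing lam' - lam
  obtain ⟨s0, -, hs0⟩ := Finset.exists_max_image Finset.univ (fun s => lam' s - lam s)
    Finset.univ_nonempty
  -- pick a0 attaining sup' in hBellman' s0
  obtain ⟨a0, -, ha0⟩ := Finset.exists_mem_eq_sup' (Finset.univ_nonempty (α := A))
    (fun a : A => (r' s0 a + ∑ s', p' s0 a s' * lam' s' : ℝ))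
  have key1 : ρ' + lam' s0 = r' s0 a0 + ∑ s', p' s0 a0 s' * lam' s' := by
    rw [hBellman' s0, ha0]
  have key2 : r s0 a0 + ∑ s', p s0 a0 s' * lam s' ≤ ρ + lam s0 := by
    rw [hBellman s0]
    exact Finset.le_sup' (fun a : A => (r s0 a + ∑ s', p s0 a s' * lam s' : ℝ)) (Finset.mem_univ a0)
  set m := Finset.univ.inf' Finset.univ_nonempty lam' with hm
  have hmle : ∀ s', m ≤ lam' s' := fun s' => Finset.inf'_le _ (Finset.mem_univ s')
  have hub : ∀ s', lam' s' - m ≤ D' := fun s' => by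
    have := Finset.le_sup' lam' (Finset.mem_univ s')
    linarith
  have hD'0 : 0 ≤ D' := by
    have := hub (Classical.arbitrary S)
    have := hmle (Classical.arbitrary S)
    linarith
  have hsum0 : ∑ s', (p' s0 a0 s' - p s0 a0 s') = 0 := by
    rw [Finset.sum_sub_distrib, hp1, hp'1]; ring
  have hbound : ∑ s', (p' s0 a0 s' - p s0 a0 s') * lam' s' ≤ D' * Δp := by
    have e1 : ∑ s', (p' s0 a0 s' - p s0 a0 s') * lam' s'
        = ∑ s', (p' s0 a0 s' - p s0 a0 s') * (lam' s' - m) := by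
      rw [Finset.sum_congr rfl (fun s' _ => by ring :
        ∀ s' ∈ Finset.univ, (p' s0 a0 s' - p s0 a0 s') * (lam' s' - m)
          = (p' s0 a0 s' - p s0 a0 s') * lam' s' - (p' s0 a0 s' - p s0 a0 s') * m),
        Finset.sum_sub_distrib, ← Finset.sum_mul, hsum0]
      ring
    rw [e1]
    have e2 : ∑ s', (p' s0 a0 s' - p s0 a0 s') * (lam' s' - m)
        ≤ ∑ s', |p' s0 a0 s' - p s0 a0 s'| * D' := by
      apply Finset.sum_le_sum
      intro s' _
      calc (p' s0 a0 s' - p s0 a0 s') * (lam' s' - m)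
          ≤ |p' s0 a0 s' - p s0 a0 s'| * (lam' s' - m) :=
            mul_le_mul_of_nonneg_right (le_abs_self _) (by linarith [hmle s'])
        _ ≤ |p' s0 a0 s' - p s0 a0 s'| * D' :=
            mul_le_mul_of_nonneg_left (hub s') (abs_nonneg _)
    have e3 : ∑ s', |p' s0 a0 s' - p s0 a0 s'| * D' ≤ Δp * D' := by
      rw [← Finset.sum_mul]
      apply mul_le_mul_of_nonneg_right _ hD'0
      calc ∑ s', |p' s0 a0 s' - p s0 a0 s'|
          = ∑ s', |p s0 a0 s' - p' s0 a0 s'| := by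
            exact Finset.sum_congr rfl fun s' _ => abs_sub_comm _ _
        _ ≤ Δp := hp s0 a0
    linarith
  have hpg : ∑ s', p s0 a0 s' * (lam' s' - lam s') ≤ lam' s0 - lam s0 := by
    calc ∑ s', p s0 a0 s' * (lam' s' - lam s')
        ≤ ∑ s', p s0 a0 s' * (lam' s0 - lam s0) := by
          apply Finset.sum_le_sum
          intro s' _
          exact mul_le_mul_of_nonneg_left (hs0 s' (Finset.mem_univ s')) (hp0 s0 a0 s')
      _ = lam' s0 - lam s0 := by rw [← Finset.sum_mul, hp1, one_mul]
  have hsplit : ∑ s', p' s0 a0 s' * lam' s'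
      = (∑ s', (p' s0 a0 s' - p s0 a0 s') * lam' s')
        + (∑ s', p s0 a0 s' * (lam' s' - lam s'))
        + (∑ s', p s0 a0 s' * lam s') := by
    rw [← Finset.sum_add_distrib, ← Finset.sum_add_distrib]
    exact Finset.sum_congr rfl fun s' _ => by ring
  have hrr : r' s0 a0 - r s0 a0 ≤ Δr := by
    have := abs_le.mp (hr s0 a0)
    linarith [this.1]
  linarith [hbound, hpg, key2, hrr, key1, hsplit]
end

section
/- Let S and A be finite nonempty sets and T ≥ 1 a natural number. For each t = 1, …, T, let r_t : S × A → ℝ and p_t : S × A → S → ℝ (each p_t(s,a,·) a probability vector) define a finite MDP M_t, and suppose (ρ_t, λ_t) satisfies the Bellman optimality equation for (r_t, p_t) with max_s λ_t(s) − min_s λ_t(s) ≤ D for some D ≥ 0. Define the variation in rewards V^r_T := Σ_{t=1}^{T−1} max_{s,a} |r_{t+1}(s,a) − r_t(s,a)|, the variation in transitions V^p_T := Σ_{t=1}^{T−1} max_{s,a} Σ_{s'} |p_{t+1}(s,a,s') − p_t(s,a,s')|, and the variation in optimal average reward V_T := Σ_{t=1}^{T−1} |ρ_{t+1} − ρ_t|.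 Then V_T ≤ V^r_T + D·V^p_T. -/
open Finset

lemma key_gain_diff {S A : Type*} [Fintype S] [Nonempty S] [Fintype A] [Nonempty A]
    (r₁ r₂ : S → A → ℝ) (p₁ p₂ : S → A → S → ℝ)
    (hp₁0 : ∀ s a s', 0 ≤ p₁ s a s')
    (hp₁1 : ∀ s a, ∑ s', p₁ s a s' = 1)
    (hp₂1 : ∀ s a, ∑ s', p₂ s a s' = 1)
    (ρ₁ ρ₂ : ℝ) (l₁ l₂ : S → ℝ)
    (hB₁ : ∀ s, ρ₁ + l₁ s = Finset.univ.sup' Finset.univ_nonempty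
        (fun a => r₁ s a + ∑ s', p₁ s a s' * l₁ s'))
    (hB₂ : ∀ s, ρ₂ + l₂ s = Finset.univ.sup' Finset.univ_nonempty
        (fun a => r₂ s a + ∑ s', p₂ s a s' * l₂ s'))
    (D : ℝ) (hD0 : 0 ≤ D)
    (hspan : Finset.univ.sup' Finset.univ_nonempty l₂
        - Finset.univ.inf' Finset.univ_nonempty l₂ ≤ D) :
    ρ₂ - ρ₁ ≤ Finset.univ.sup' Finset.univ_nonempty
          (fun sa : S × A => |r₂ sa.1 sa.2 - r₁ sa.1 sa.2|)
      + D * Finset.univ.sup' Finset.univ_nonempty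
          (fun sa : S × A => ∑ s', |p₂ sa.1 sa.2 s' - p₁ sa.1 sa.2 s'|) := by
  obtain ⟨s₀, -, hs₀⟩ := Finset.exists_max_image Finset.univ
    (fun s => l₂ s - l₁ s) Finset.univ_nonempty
  obtain ⟨a₀, -, ha₀⟩ := Finset.exists_mem_eq_sup' (Finset.univ_nonempty (α := A))
    (fun a => r₂ s₀ a + ∑ s', p₂ s₀ a s' * l₂ s')
  have h2 : ρ₂ + l₂ s₀ = r₂ s₀ a₀ + ∑ s', p₂ s₀ a₀ s' * l₂ s' := by
    rw [hB₂ s₀, ha₀]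
  have h1 : r₁ s₀ a₀ + ∑ s', p₁ s₀ a₀ s' * l₁ s' ≤ ρ₁ + l₁ s₀ := by
    rw [hB₁ s₀]
    exact Finset.le_sup' (fun a => r₁ s₀ a + ∑ s', p₁ s₀ a s' * l₁ s') (Finset.mem_univ a₀)
  set c := Finset.univ.inf' Finset.univ_nonempty l₂ with hc
  have hl₂ : ∀ s', 0 ≤ l₂ s' - c ∧ l₂ s' - c ≤ D := by
    intro s'
    have h1 : c ≤ l₂ s' := Finset.inf'_le l₂ (Finset.mem_univ s')
    have h2 : l₂ s' ≤ Finset.univ.sup' Finset.univ_nonempty l₂ :=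
      Finset.le_sup' l₂ (Finset.mem_univ s')
    constructor <;> linarith
  -- key decomposition
  have hdec : (∑ s', p₂ s₀ a₀ s' * l₂ s') - (∑ s', p₁ s₀ a₀ s' * l₁ s')
      = (∑ s', p₁ s₀ a₀ s' * (l₂ s' - l₁ s'))
        + (∑ s', (p₂ s₀ a₀ s' - p₁ s₀ a₀ s') * (l₂ s' - c)) := by
    have e1 : ∑ s', (p₂ s₀ a₀ s' - p₁ s₀ a₀ s') * c = 0 := by
      rw [← Finset.sum_mul, Finset.sum_sub_distrib, hp₂1, hp₁1]
      ring
    have e2 : (∑ s', (p₂ s₀ a₀ s' - p₁ s₀ a₀ s') * (l₂ s' - c))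
        = (∑ s', (p₂ s₀ a₀ s' - p₁ s₀ a₀ s') * l₂ s') - ∑ s', (p₂ s₀ a₀ s' - p₁ s₀ a₀ s') * c := by
      rw [← Finset.sum_sub_distrib]; apply Finset.sum_congr rfl; intros; ring
    rw [e2, e1, sub_zero, ← Finset.sum_add_distrib, ← Finset.sum_sub_distrib]
    apply Finset.sum_congr rfl; intros; ring
  have hterm1 : (∑ s', p₁ s₀ a₀ s' * (l₂ s' - l₁ s')) ≤ l₂ s₀ - l₁ s₀ := by
    calc (∑ s', p₁ s₀ a₀ s' * (l₂ s' - l₁ s'))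
        ≤ ∑ s', p₁ s₀ a₀ s' * (l₂ s₀ - l₁ s₀) := by
          apply Finset.sum_le_sum
          intro s' _
          exact mul_le_mul_of_nonneg_left (hs₀ s' (Finset.mem_univ s')) (hp₁0 s₀ a₀ s')
      _ = l₂ s₀ - l₁ s₀ := by rw [← Finset.sum_mul, hp₁1]; ring
  have hterm2 : (∑ s', (p₂ s₀ a₀ s' - p₁ s₀ a₀ s') * (l₂ s' - c))
      ≤ D * ∑ s', |p₂ s₀ a₀ s' - p₁ s₀ a₀ s'| := by
    rw [Finset.mul_sum]
    apply Finset.sum_le_sum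
    intro s' _
    calc (p₂ s₀ a₀ s' - p₁ s₀ a₀ s') * (l₂ s' - c)
        ≤ |p₂ s₀ a₀ s' - p₁ s₀ a₀ s'| * (l₂ s' - c) :=
          mul_le_mul_of_nonneg_right (le_abs_self _) (hl₂ s').1
      _ ≤ |p₂ s₀ a₀ s' - p₁ s₀ a₀ s'| * D :=
          mul_le_mul_of_nonneg_left (hl₂ s').2 (abs_nonneg _)
      _ = D * |p₂ s₀ a₀ s' - p₁ s₀ a₀ s'| := mul_comm _ _
  have hr : r₂ s₀ a₀ - r₁ s₀ a₀ ≤ Finset.univ.sup' Finset.univ_nonempty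
      (fun sa : S × A => |r₂ sa.1 sa.2 - r₁ sa.1 sa.2|) :=
    le_trans (le_abs_self _) (Finset.le_sup'
      (fun sa : S × A => |r₂ sa.1 sa.2 - r₁ sa.1 sa.2|) (Finset.mem_univ (s₀, a₀)))
  have hp : D * (∑ s', |p₂ s₀ a₀ s' - p₁ s₀ a₀ s'|) ≤ D * Finset.univ.sup' Finset.univ_nonempty
      (fun sa : S × A => ∑ s', |p₂ sa.1 sa.2 s' - p₁ sa.1 sa.2 s'|) :=
    mul_le_mul_of_nonneg_left (Finset.le_sup'
      (fun sa : S × A => ∑ s', |p₂ sa.1 sa.2 s' - p₁ sa.1 sa.2 s'|) (Finset.mem_univ (s₀, a₀))) hD0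
  linarith

/-- Variational bound: the variation in optimal average reward across a sequence of
MDPs `M_1, …, M_T` (with bias spans bounded by `D`) is bounded by the variation in
rewards plus `D` times the variation in transition probabilities:
`V_T ≤ V^r_T + D·V^p_T`. -/
theorem variation_in_gain_le_reward_and_transition_variation
    {S A : Type*} [Fintype S] [Nonempty S] [Fintype A] [Nonempty A]
    (T : ℕ) (hT : 1 ≤ T)
    (r : ℕ → S → A → ℝ) (p : ℕ → S → A → S → ℝ)
    (hp0 : ∀ t ∈ Finset.Icc 1 T, ∀ s a s', 0 ≤ p t s a s')
    (hp1 : ∀ t ∈ Finset.Icc 1 T, ∀ s a, ∑ s', p t s a s' = 1)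
    (ρ : ℕ → ℝ) (lam : ℕ → S → ℝ)
    (hBellman : ∀ t ∈ Finset.Icc 1 T, ∀ s, ρ t + lam t s =
      Finset.univ.sup' Finset.univ_nonempty
        (fun a => r t s a + ∑ s', p t s a s' * lam t s'))
    (D : ℝ) (hD0 : 0 ≤ D)
    (hspan : ∀ t ∈ Finset.Icc 1 T,
      Finset.univ.sup' Finset.univ_nonempty (lam t)
        - Finset.univ.inf' Finset.univ_nonempty (lam t) ≤ D) :
    (∑ t ∈ Finset.Icc 1 (T - 1), |ρ (t + 1) - ρ t|) ≤
      (∑ t ∈ Finset.Icc 1 (T - 1),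
        Finset.univ.sup' Finset.univ_nonempty
          (fun sa : S × A => |r (t + 1) sa.1 sa.2 - r t sa.1 sa.2|))
      + D * (∑ t ∈ Finset.Icc 1 (T - 1),
          Finset.univ.sup' Finset.univ_nonempty
            (fun sa : S × A => ∑ s', |p (t + 1) sa.1 sa.2 s' - p t sa.1 sa.2 s'|)) := by
  rw [Finset.mul_sum, ← Finset.sum_add_distrib]
  apply Finset.sum_le_sum
  intro t ht
  rw [Finset.mem_Icc] at ht
  have ht1 : t ∈ Finset.Icc 1 T := by rw [Finset.mem_Icc]; omega
  have ht2 : t + 1 ∈ Finset.Icc 1 T := by rw [Finset.mem_Icc]; omega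
  rw [abs_sub_le_iff]
  constructor
  · exact key_gain_diff (r t) (r (t+1)) (p t) (p (t+1)) (hp0 t ht1) (hp1 t ht1)
      (hp1 (t+1) ht2) (ρ t) (ρ (t+1)) (lam t) (lam (t+1)) (hBellman t ht1)
      (hBellman (t+1) ht2) D hD0 (hspan (t+1) ht2)
  · have h := key_gain_diff (r (t+1)) (r t) (p (t+1)) (p t) (hp0 (t+1) ht2)
      (hp1 (t+1) ht2) (hp1 t ht1) (ρ (t+1)) (ρ t) (lam (t+1)) (lam t)
      (hBellman (t+1) ht2) (hBellman t ht1) D hD0 (hspan t ht1)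
    have e1 : (fun sa : S × A => |r t sa.1 sa.2 - r (t+1) sa.1 sa.2|)
        = (fun sa : S × A => |r (t+1) sa.1 sa.2 - r t sa.1 sa.2|) :=
      funext fun sa => abs_sub_comm _ _
    have e2 : (fun sa : S × A => ∑ s', |p t sa.1 sa.2 s' - p (t+1) sa.1 sa.2 s'|)
        = (fun sa : S × A => ∑ s', |p (t+1) sa.1 sa.2 s' - p t sa.1 sa.2 s'|) :=
      funext fun sa => Finset.sum_congr rfl fun s' _ => abs_sub_comm _ _
    rw [e1, e2] at h
    exact h
end

section
/- Let S and A be finite nonempty sets, r : S × A → ℝ, and p : S × A → S → ℝ with each p(s,a,·) a probability vector. Define the finite-horizon optimal values by v_0(s) := 0 and v_{n+1}(s) := max_{a∈A} ( r(s,a) + Σ_{s'} p(s,a,s')·v_n(s') ) for all s ∈ S and n ≥ 0. If (ρ, λ) satisfies the Bellman optimality equation for (r, p) and max_s λ(s) − min_s λ(s) ≤ D, then for every T ≥ 0 and every s ∈ S, v_T(s) ≤ T·ρ + D. -/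
/-- The optimal `T`-step reward exceeds `T` times the optimal average reward by at most
the bias span: if `(ρ, λ)` satisfies the Bellman optimality equation and the span of
`λ` is at most `D`, then `v_T(s) ≤ T·ρ + D` for the finite-horizon optimal values. -/
theorem finite_horizon_value_le_gain_mul_add_span
    {S A : Type*} [Fintype S] [Nonempty S] [Fintype A] [Nonempty A]
    (r : S → A → ℝ) (p : S → A → S → ℝ)
    (hp0 : ∀ s a s', 0 ≤ p s a s') (hp1 : ∀ s a, ∑ s', p s a s' = 1)
    (v : ℕ → S → ℝ)
    (hv0 : ∀ s, v 0 s = 0)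
    (hvrec : ∀ n s, v (n + 1) s =
      Finset.univ.sup' Finset.univ_nonempty
        (fun a => r s a + ∑ s', p s a s' * v n s'))
    (ρ : ℝ) (lam : S → ℝ)
    (hBellman : ∀ s, ρ + lam s =
      Finset.univ.sup' Finset.univ_nonempty
        (fun a => r s a + ∑ s', p s a s' * lam s'))
    (D : ℝ)
    (hspan : Finset.univ.sup' Finset.univ_nonempty lam
        - Finset.univ.inf' Finset.univ_nonempty lam ≤ D) :
    ∀ (T : ℕ) (s : S), v T s ≤ T * ρ + D := by
  set m := Finset.univ.inf' Finset.univ_nonempty lam with hm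
  have key : ∀ (T : ℕ) (s : S), v T s ≤ T * ρ + lam s - m := by
    intro T
    induction T with
    | zero =>
      intro s
      have : m ≤ lam s := Finset.inf'_le _ (Finset.mem_univ s)
      simp [hv0]
      linarith
    | succ n ih =>
      intro s
      rw [hvrec]
      have h1 : ∀ a : A, r s a + ∑ s', p s a s' * v n s'
          ≤ r s a + ∑ s', p s a s' * lam s' + (n * ρ - m) := by
        intro a
        have hsum : ∑ s', p s a s' * v n s'
            ≤ ∑ s', p s a s' * (lam s' + (n * ρ - m)) := by
          apply Finset.sum_le_sum
          intro i _
          have := ih i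
          nlinarith [hp0 s a i]
        have hexp : ∑ s', p s a s' * (lam s' + (n * ρ - m))
            = (∑ s', p s a s' * lam s') + (n * ρ - m) := by
          simp only [mul_add]
          rw [Finset.sum_add_distrib, ← Finset.sum_mul, hp1, one_mul]
        linarith
      have h2 : Finset.univ.sup' Finset.univ_nonempty
          (fun a => r s a + ∑ s', p s a s' * v n s')
          ≤ Finset.univ.sup' Finset.univ_nonempty
          (fun a => r s a + ∑ s', p s a s' * lam s') + (n * ρ - m) := by
        apply Finset.sup'_le
        intro a _
        exact le_trans (h1 a) (by
          have := Finset.le_sup' (fun a => r s a + ∑ s', p s a s' * lam s')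
            (Finset.mem_univ a)
          linarith)
      rw [← hBellman s] at h2
      push_cast
      linarith
  intro T s
  have h3 : lam s ≤ Finset.univ.sup' Finset.univ_nonempty lam :=
    Finset.le_sup' _ (Finset.mem_univ s)
  have := key T s
  linarith
end

section
/- Let (Ω, ℱ, P) be a probability space with a filtration (ℱ_τ)_{τ≥0}, let S and A be finite nonempty sets, and let p : S × A → S → ℝ be such that each p(s,a,·) is a probability vector. Let (s_τ)_{τ≥1} and (a_τ)_{τ≥1} be S- and A-valued processes with s_τ and a_τ measurable with respect to ℱ_τ, and suppose that for every τ ≥ 1 and every s' ∈ S, P( s_{τ+1} = s' | ℱ_τ ) = p(s_τ, a_τ, s') almost surely. Let f : S → ℝ, set F := max_s f(s) − min_s f(s), and let T ≥ 1 and δ ∈ (0,1). Then with probability at least 1 − δ, Σ_{τ=1}^{T} ( Σ_{s'} p(s_τ, a_τ, s')·f(s') − f(s_τ) ) ≤ F·√(2·T·log(1/δ)) + F. -/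
/-!
The drift `∑ p(s_τ, a_τ, ·) f - f(s_τ)` telescopes: up to the boundary term
`f(s_{T+1}) - f(s_1) ≤ F` it is the sum of the increments `E[f(s_{τ+1}) | ℱ_τ] - f(s_{τ+1})`,
a martingale difference sequence bounded by `F`. The conditional Hoeffding lemma (`exp` lies below
its chord on `[-F, F]`, and `cosh x ≤ exp (x² / 2)`) makes the partial sums sub-Gaussian with
variance proxy `T F²`, and the Chernoff bound at level `δ` gives `F √(2 T log (1 / δ))`.
-/

open MeasureTheory ProbabilityTheory Real

theorem Real.exp_mul_le_cosh_add_sinh_div_mul {c y : ℝ} (t : ℝ) (hy : |y| ≤ c) :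
    exp (t * y) ≤ cosh (t * c) + sinh (t * c) / c * y := by
  obtain rfl | hc := ((abs_nonneg y).trans hy).eq_or_lt
  · simp [abs_nonpos_iff.mp hy]
  obtain ⟨hy₁, hy₂⟩ := abs_le.mp hy
  have hconvex := convexOn_exp.2 (Set.mem_univ (-(t * c))) (Set.mem_univ (t * c))
    (div_nonneg (sub_nonneg.2 hy₂) (by positivity) : 0 ≤ (c - y) / (2 * c))
    (div_nonneg (by linarith) (by positivity) : 0 ≤ (c + y) / (2 * c)) (by field_simp; ring)
  simp only [smul_eq_mul] at hconvex
  calc exp (t * y) = exp ((c - y) / (2 * c) * -(t * c) + (c + y) / (2 * c) * (t * c)) := by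
        congr 1; field_simp; ring
    _ ≤ _ := hconvex
    _ = _ := by rw [cosh_eq, sinh_eq]; field_simp; ring

theorem Finset.apply_mem_Icc_inf'_sup' {ι : Type*} [Fintype ι] [Nonempty ι] (f : ι → ℝ) (i : ι) :
    f i ∈ Set.Icc (univ.inf' univ_nonempty f) (univ.sup' univ_nonempty f) :=
  ⟨inf'_le f (mem_univ i), le_sup' f (mem_univ i)⟩

theorem Finset.sum_mul_mem_Icc_inf'_sup' {ι : Type*} [Fintype ι] [Nonempty ι] {w : ι → ℝ}
    (hw₀ : ∀ i, 0 ≤ w i) (hw₁ : ∑ i, w i = 1) (f : ι → ℝ) :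
    ∑ i, w i * f i ∈ Set.Icc (univ.inf' univ_nonempty f) (univ.sup' univ_nonempty f) := by
  have hpos : 0 < ∑ i, w i := hw₁ ▸ one_pos
  simp_rw [← smul_eq_mul, ← Finset.centerMass_eq_of_sum_1 _ _ hw₁]
  exact ⟨Finset.inf_le_centerMass (fun i _ => hw₀ i) hpos,
    Finset.centerMass_le_sup (fun i _ => hw₀ i) hpos⟩

def MeasureTheory.Filtration.shift {Ω : Type*} {m : MeasurableSpace Ω} (ℱ : Filtration ℕ m)
    (k : ℕ) : Filtration ℕ m where
  seq n := ℱ (n + k)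
  mono' _ _ h := ℱ.mono (Nat.add_le_add_right h k)
  le' _ := ℱ.le _

section Conditional

variable {Ω : Type*} {m m₀ : MeasurableSpace Ω} {μ : Measure Ω} [IsFiniteMeasure μ]

theorem condExp_exp_mul_le_of_abs_le (hm : m ≤ m₀) {X : Ω → ℝ} {c : ℝ}
    (hX : AEMeasurable X μ) (hbdd : ∀ ω, |X ω| ≤ c) (hmean : μ[X|m] =ᵐ[μ] 0) (t : ℝ) :
    μ[fun ω => exp (t * X ω)|m] ≤ᵐ[μ] fun _ => exp (t ^ 2 * c ^ 2 / 2) := by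
  have hX_Icc : ∀ᵐ ω ∂μ, X ω ∈ Set.Icc (-c) c := ae_of_all _ fun ω => abs_le.mp (hbdd ω)
  have hXint : Integrable X μ := .of_mem_Icc (-c) c hX hX_Icc
  -- Bound `exp (t X)` by its chord on `[-c, c]`, whose conditional expectation is `cosh (t c)`.
  have hchord := condExp_mono (m := m) (integrable_exp_mul_of_mem_Icc hX hX_Icc)
    ((integrable_const (cosh (t * c))).add (hXint.smul (sinh (t * c) / c)))
    (ae_of_all _ fun ω => exp_mul_le_cosh_add_sinh_div_mul t (hbdd ω))
  have hlin := condExp_add (m := m) (integrable_const (cosh (t * c)))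
    (hXint.smul (sinh (t * c) / c))
  rw [condExp_const hm] at hlin
  filter_upwards [hchord, hlin, condExp_smul (m := m) (sinh (t * c) / c) X, hmean]
    with ω h_chord h_lin h_smul h_mean
  calc _ ≤ _ := h_chord
    _ = cosh (t * c) := by
      rw [h_lin, Pi.add_apply, h_smul, Pi.smul_apply, h_mean]
      simp
    _ ≤ exp ((t * c) ^ 2 / 2) := cosh_le_exp_half_sq _
    _ = _ := by ring_nf

theorem condExp_comp_eq_sum_mul {S : Type*} [Fintype S] [MeasurableSpace S]
    [MeasurableSingletonClass S] {Z : Ω → S} (hZ : Measurable Z) {q : Ω → S → ℝ}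
    (hq : ∀ x, μ[{ω | Z ω = x}.indicator (1 : Ω → ℝ)|m] =ᵐ[μ] fun ω => q ω x) (f : S → ℝ) :
    μ[fun ω => f (Z ω)|m] =ᵐ[μ] fun ω => ∑ x, q ω x * f x := by
  have hdecomp : (fun ω => f (Z ω)) = ∑ x, f x • {ω | Z ω = x}.indicator (1 : Ω → ℝ) := by
    ext ω
    rw [Finset.sum_apply, Fintype.sum_eq_single (Z ω) fun x hx => by simp [Ne.symm hx]]
    simp
  have hind : ∀ x, Integrable ({ω | Z ω = x}.indicator (1 : Ω → ℝ)) μ := fun x =>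
    (integrable_const 1).indicator (hZ (measurableSet_singleton x))
  rw [hdecomp]
  filter_upwards [condExp_finsetSum (fun x _ => (hind x).smul (f x)) m,
    ae_all_iff.2 fun x => condExp_smul (m := m) (f x) ({ω | Z ω = x}.indicator (1 : Ω → ℝ)),
    ae_all_iff.2 hq] with ω h_sum h_smul h_q
  rw [h_sum, Finset.sum_apply]
  exact Finset.sum_congr rfl fun x _ => by rw [h_smul, Pi.smul_apply, h_q, smul_eq_mul, mul_comm]

theorem condExp_sub_eq_zero_of_condExp_eq (hm : m ≤ m₀) {Y Z : Ω → ℝ}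
    (hY : StronglyMeasurable[m] Y) (hZ : Integrable Z μ) (h : μ[Z|m] =ᵐ[μ] Y) :
    μ[Y - Z|m] =ᵐ[μ] 0 := by
  have hYint : Integrable Y μ := integrable_condExp.congr h
  filter_upwards [condExp_sub hYint hZ m, h] with ω h_sub h_Z
  rw [h_sub, Pi.sub_apply, condExp_of_stronglyMeasurable hm hY hYint, h_Z, sub_self, Pi.zero_apply]

end Conditional

theorem Finset.sum_Icc_one_eq_sum_range {M : Type*} [AddCommMonoid M] (h : ℕ → M) (n : ℕ) :
    ∑ i ∈ Icc 1 n, h i = ∑ i ∈ range n, h (i + 1) := by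
  rw [range_eq_Ico, sum_Ico_add' h 0 n 1]
  rfl

theorem Finset.abs_sum_le_card_mul {ι : Type*} (s : Finset ι) {x : ι → ℝ} {c : ℝ}
    (h : ∀ i ∈ s, |x i| ≤ c) : |∑ i ∈ s, x i| ≤ s.card * c := by
  simpa using (Finset.abs_sum_le_sum_abs x s).trans (Finset.sum_le_card_nsmul s _ c h)

theorem integrable_exp_mul_sum_of_abs_le {Ω : Type*} {_ : MeasurableSpace Ω} {μ : Measure Ω}
    [IsFiniteMeasure μ] {ι : Type*} {Y : ι → Ω → ℝ} {c : ℝ}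
    (hY : ∀ i, AEMeasurable (Y i) μ) (hbdd : ∀ i ω, |Y i ω| ≤ c) (t : ℝ) (s : Finset ι) :
    Integrable (fun ω => exp (t * ∑ i ∈ s, Y i ω)) μ :=
  integrable_exp_mul_of_mem_Icc (Finset.aemeasurable_fun_sum s fun i _ => hY i)
    (ae_of_all _ fun ω => abs_le.mp (s.abs_sum_le_card_mul fun i _ => hbdd i ω))

section Azuma

variable {Ω : Type*} {m₀ : MeasurableSpace Ω} {μ : Measure Ω} [IsProbabilityMeasure μ]
  {ℱ : Filtration ℕ m₀} {X : ℕ → Ω → ℝ} {c : ℝ}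

theorem mgf_sum_le_of_condExp_eq_zero (hX : ∀ k, Measurable[ℱ (k + 1)] (X k))
    (hbdd : ∀ k ω, |X k ω| ≤ c) (hmean : ∀ k, μ[X k|ℱ k] =ᵐ[μ] 0) (t : ℝ) (n : ℕ) :
    mgf (fun ω => ∑ k ∈ Finset.range n, X k ω) μ t ≤ exp (n * (t ^ 2 * c ^ 2 / 2)) := by
  have hsum_meas : ∀ n, Measurable[ℱ n] fun ω => ∑ k ∈ Finset.range n, X k ω := fun n =>
    Finset.measurable_fun_sum _ fun k hk =>
      (hX k).mono (ℱ.mono (Finset.mem_range.mp hk)) le_rfl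
  have hsum_int : ∀ n, Integrable (fun ω => exp (t * ∑ k ∈ Finset.range n, X k ω)) μ :=
    fun n => integrable_exp_mul_sum_of_abs_le
      (fun k => ((hX k).mono (ℱ.le _) le_rfl).aemeasurable) hbdd t (Finset.range n)
  induction n with
  | zero => simp [mgf]
  | succ n ih =>
    have hX_meas : Measurable (X n) := (hX n).mono (ℱ.le _) le_rfl
    have hsplit : (fun ω => exp (t * ∑ k ∈ Finset.range (n + 1), X k ω)) =
        (fun ω => exp (t * ∑ k ∈ Finset.range n, X k ω)) * fun ω => exp (t * X n ω) := by
      ext ω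
      simp [Finset.sum_range_succ, mul_add, exp_add]
    -- Pull the `ℱ n`-measurable factor out of the conditional expectation, then use Hoeffding.
    have hpull := condExp_mul_of_stronglyMeasurable_left (m := ℱ n)
      ((hsum_meas n).const_mul t).exp.stronglyMeasurable
      (hsplit ▸ hsum_int (n + 1)) (integrable_exp_mul_of_mem_Icc (a := -c) (b := c)
        hX_meas.aemeasurable (ae_of_all _ fun ω => abs_le.mp (hbdd n ω)))
    calc mgf (fun ω => ∑ k ∈ Finset.range (n + 1), X k ω) μ t
        = ∫ ω, μ[(fun ω => exp (t * ∑ k ∈ Finset.range n, X k ω)) *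
            fun ω => exp (t * X n ω)|ℱ n] ω ∂μ := by
          rw [integral_condExp (ℱ.le n), ← hsplit]; rfl
      _ ≤ ∫ ω, exp (t * ∑ k ∈ Finset.range n, X k ω) * exp (t ^ 2 * c ^ 2 / 2) ∂μ := by
          refine integral_mono_ae integrable_condExp ((hsum_int n).mul_const _) ?_
          filter_upwards [hpull, condExp_exp_mul_le_of_abs_le (ℱ.le n) hX_meas.aemeasurable
            (hbdd n) (hmean n) t] with ω h_pull h_hoeffding
          rw [h_pull, Pi.mul_apply]
          exact mul_le_mul_of_nonneg_left h_hoeffding (exp_pos _).le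
      _ = mgf (fun ω => ∑ k ∈ Finset.range n, X k ω) μ t * exp (t ^ 2 * c ^ 2 / 2) :=
          integral_mul_const _ _
      _ ≤ exp (n * (t ^ 2 * c ^ 2 / 2)) * exp (t ^ 2 * c ^ 2 / 2) := by gcongr
      _ = exp ((n + 1 : ℕ) * (t ^ 2 * c ^ 2 / 2)) := by rw [← exp_add]; push_cast; ring_nf

theorem measureReal_sum_ge_le_of_condExp_eq_zero (hX : ∀ k, Measurable[ℱ (k + 1)] (X k))
    (hbdd : ∀ k ω, |X k ω| ≤ c) (hmean : ∀ k, μ[X k|ℱ k] =ᵐ[μ] 0) (n : ℕ) {ε : ℝ}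
    (hε : 0 ≤ ε) :
    μ.real {ω | ε ≤ ∑ k ∈ Finset.range n, X k ω} ≤ exp (-ε ^ 2 / (2 * n * c ^ 2)) := by
  obtain hnc | hnc := (by positivity : (0 : ℝ) ≤ n * c ^ 2).eq_or_lt
  · rw [mul_assoc, ← hnc, mul_zero, div_zero, exp_zero]
    exact measureReal_le_one
  set t := ε / (n * c ^ 2) with ht
  calc μ.real {ω | ε ≤ ∑ k ∈ Finset.range n, X k ω}
      ≤ exp (-t * ε) * mgf (fun ω => ∑ k ∈ Finset.range n, X k ω) μ t :=
        measure_ge_le_exp_mul_mgf ε (by positivity) (integrable_exp_mul_sum_of_abs_le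
          (fun k => ((hX k).mono (ℱ.le _) le_rfl).aemeasurable) hbdd t _)
    _ ≤ exp (-t * ε) * exp (n * (t ^ 2 * c ^ 2 / 2)) := by
        gcongr
        exact mgf_sum_le_of_condExp_eq_zero hX hbdd hmean t n
    _ = exp (-ε ^ 2 / (2 * n * c ^ 2)) := by
        rw [← exp_add, ht]
        congr 1
        field_simp
        ring

theorem measure_sum_gt_le_of_condExp_eq_zero (hX : ∀ k, Measurable[ℱ (k + 1)] (X k))
    (hbdd : ∀ k ω, |X k ω| ≤ c) (hmean : ∀ k, μ[X k|ℱ k] =ᵐ[μ] 0) (n : ℕ) {δ : ℝ}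
    (hδ : 0 < δ) :
    μ {ω | c * √(2 * n * log (1 / δ)) < ∑ k ∈ Finset.range n, X k ω} ≤ ENNReal.ofReal δ := by
  obtain hδ1 | hδ1 := le_or_gt 1 δ
  · exact prob_le_one.trans (ENNReal.one_le_ofReal.2 hδ1)
  obtain hnc | hnc := le_or_gt ((n : ℝ) * c) 0
  · refine (measure_mono_null (t := ∅) (fun ω hω => ?_) (measure_empty (μ := μ))).trans_le zero_le
    have hc : 0 ≤ c := (abs_nonneg _).trans (hbdd 0 ω)
    have hsum := (abs_le.mp ((Finset.range n).abs_sum_le_card_mul fun k _ => hbdd k ω)).2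
    simp only [Finset.card_range, Set.mem_ofPred_eq] at hsum hω
    exact absurd hω (not_lt.2 (by nlinarith [sqrt_nonneg (2 * n * log (1 / δ))]))
  have hc : 0 < c := pos_of_mul_pos_right hnc n.cast_nonneg
  have hlog : 0 < log (1 / δ) := log_pos (one_lt_one_div hδ hδ1)
  calc μ {ω | c * √(2 * n * log (1 / δ)) < ∑ k ∈ Finset.range n, X k ω}
      ≤ μ {ω | c * √(2 * n * log (1 / δ)) ≤ ∑ k ∈ Finset.range n, X k ω} :=
        measure_mono (Set.ofPred_subset_ofPred.2 fun _ => le_of_lt)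
    _ ≤ ENNReal.ofReal (exp (-(c * √(2 * n * log (1 / δ))) ^ 2 / (2 * n * c ^ 2))) := by
        rw [← ofReal_measureReal]
        exact ENNReal.ofReal_le_ofReal (measureReal_sum_ge_le_of_condExp_eq_zero hX hbdd hmean n
          (by positivity))
    _ = ENNReal.ofReal δ := by
        have hn : (n : ℝ) ≠ 0 := by rintro h; simp [h] at hnc
        rw [mul_pow, sq_sqrt (by positivity),
          show -(c ^ 2 * (2 * n * log (1 / δ))) / (2 * n * c ^ 2) = -log (1 / δ) by field_simp,
          exp_neg, exp_log (by positivity), one_div, inv_inv]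

end Azuma

theorem Measurable.of_discrete_comp₂ {Ω S A β : Type*} {_ : MeasurableSpace Ω} [Countable S]
    [MeasurableSpace S] [DiscreteMeasurableSpace S] [MeasurableSpace A] [DiscreteMeasurableSpace A]
    [MeasurableSpace β] (g : S → A → β) {σ : Ω → S} {α : Ω → A} (hσ : Measurable σ)
    (hα : Measurable α) : Measurable fun ω => g (σ ω) (α ω) :=
  (measurable_from_prod_countable_right (f := Function.uncurry g) fun _ => .of_discrete).comp
    (hσ.prodMk hα)

section Transition

variable {Ω : Type*} {m₀ : MeasurableSpace Ω} {S A : Type*} [Fintype S]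

/-- The increment at time `k + 1`: it is `ℱ (k + 2)`-measurable with conditional mean zero given
`ℱ (k + 1)`, so the increments form a martingale difference sequence for `ℱ.shift 1`. -/
def transitionIncrement (p : S → A → S → ℝ) (f : S → ℝ) (s : ℕ → Ω → S) (a : ℕ → Ω → A)
    (k : ℕ) (ω : Ω) : ℝ :=
  ∑ s', p (s (k + 1) ω) (a (k + 1) ω) s' * f s' - f (s (k + 2) ω)

theorem sum_Icc_sub_eq_sum_transitionIncrement_add (p : S → A → S → ℝ) (f : S → ℝ)
    (s : ℕ → Ω → S) (a : ℕ → Ω → A) (T : ℕ) (ω : Ω) :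
    ∑ τ ∈ Finset.Icc 1 T, ((∑ s', p (s τ ω) (a τ ω) s' * f s') - f (s τ ω)) =
      ∑ k ∈ Finset.range T, transitionIncrement p f s a k ω + (f (s (T + 1) ω) - f (s 1 ω)) := by
  rw [Finset.sum_Icc_one_eq_sum_range,
    ← Finset.sum_range_sub (fun k => f (s (k + 1) ω)) T, ← Finset.sum_add_distrib]
  exact Finset.sum_congr rfl fun k _ => by rw [transitionIncrement]; ring

theorem abs_transitionIncrement_le [Nonempty S] {p : S → A → S → ℝ}
    (hp0 : ∀ s a s', 0 ≤ p s a s') (hp1 : ∀ s a, ∑ s', p s a s' = 1) (f : S → ℝ)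
    (s : ℕ → Ω → S) (a : ℕ → Ω → A) (k : ℕ) (ω : Ω) :
    |transitionIncrement p f s a k ω| ≤
      Finset.univ.sup' Finset.univ_nonempty f - Finset.univ.inf' Finset.univ_nonempty f :=
  have hg := Finset.sum_mul_mem_Icc_inf'_sup' (hp0 (s (k + 1) ω) (a (k + 1) ω)) (hp1 _ _) f
  have hf := Finset.apply_mem_Icc_inf'_sup' f (s (k + 2) ω)
  abs_sub_le_of_le_of_le hg.1 hg.2 hf.1 hf.2

variable [MeasurableSpace S] [DiscreteMeasurableSpace S] [MeasurableSpace A]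
  [DiscreteMeasurableSpace A] {ℱ : Filtration ℕ m₀} {s : ℕ → Ω → S} {a : ℕ → Ω → A}

theorem measurable_transitionIncrement (p : S → A → S → ℝ) (f : S → ℝ)
    (hs : ∀ τ, 1 ≤ τ → Measurable[ℱ τ] (s τ)) (ha : ∀ τ, 1 ≤ τ → Measurable[ℱ τ] (a τ))
    (k : ℕ) : Measurable[ℱ.shift 1 (k + 1)] (transitionIncrement p f s a k) :=
  ((Measurable.of_discrete_comp₂ (fun σ α => ∑ s', p σ α s' * f s') (hs _ le_add_self)
    (ha _ le_add_self)).mono (ℱ.mono (Nat.le_succ _)) le_rfl).sub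
    (Measurable.of_discrete.comp (hs _ le_add_self))

theorem condExp_transitionIncrement_eq_zero {μ : Measure Ω} [IsFiniteMeasure μ]
    {p : S → A → S → ℝ} (hs : ∀ τ, 1 ≤ τ → Measurable[ℱ τ] (s τ))
    (ha : ∀ τ, 1 ≤ τ → Measurable[ℱ τ] (a τ))
    (htrans : ∀ τ, 1 ≤ τ → ∀ s' : S, μ[{ω | s (τ + 1) ω = s'}.indicator (1 : Ω → ℝ)|ℱ τ]
      =ᵐ[μ] fun ω => p (s τ ω) (a τ ω) s') (f : S → ℝ) (k : ℕ) :
    μ[transitionIncrement p f s a k|ℱ.shift 1 k] =ᵐ[μ] 0 := by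
  have hs' : Measurable (s (k + 2)) := (hs _ le_add_self).mono (ℱ.le _) le_rfl
  exact condExp_sub_eq_zero_of_condExp_eq (ℱ.le _)
    (Measurable.of_discrete_comp₂ (fun σ α => ∑ s', p σ α s' * f s') (hs _ le_add_self)
      (ha _ le_add_self)).stronglyMeasurable
    ((Integrable.of_finite (μ := μ.map (s (k + 2)))).comp_measurable hs')
    (condExp_comp_eq_sum_mul hs' (htrans (k + 1) le_add_self) f)

end Transition

theorem transition_martingale_bound_general
    {Ω : Type*} {m0 : MeasurableSpace Ω} (μ : Measure Ω) [IsProbabilityMeasure μ]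
    (ℱ : Filtration ℕ m0)
    {S A : Type*} [Fintype S] [Nonempty S]
    (p : S → A → S → ℝ)
    (hp0 : ∀ s a s', 0 ≤ p s a s') (hp1 : ∀ s a, ∑ s', p s a s' = 1)
    (s : ℕ → Ω → S) (a : ℕ → Ω → A)
    (hs_meas : ∀ τ, 1 ≤ τ → @Measurable Ω S (ℱ τ) ⊤ (s τ))
    (ha_meas : ∀ τ, 1 ≤ τ → @Measurable Ω A (ℱ τ) ⊤ (a τ))
    (htrans : ∀ τ, 1 ≤ τ → ∀ s' : S,
      μ[Set.indicator {ω | s (τ + 1) ω = s'} (1 : Ω → ℝ) | ℱ τ]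
        =ᵐ[μ] fun ω => p (s τ ω) (a τ ω) s')
    (f : S → ℝ) (F : ℝ)
    (hF : F = Finset.univ.sup' Finset.univ_nonempty f
        - Finset.univ.inf' Finset.univ_nonempty f)
    (T : ℕ) (δ : ℝ) (hδ0 : 0 < δ) :
    ENNReal.ofReal (1 - δ) ≤
      μ {ω | ∑ τ ∈ Finset.Icc 1 T,
          ((∑ s', p (s τ ω) (a τ ω) s' * f s') - f (s τ ω)) ≤
        F * Real.sqrt (2 * T * Real.log (1 / δ)) + F} := by
  let : MeasurableSpace S := ⊤
  let : MeasurableSpace A := ⊤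
  have hbdd := fun k ω => hF ▸ abs_transitionIncrement_le hp0 hp1 f s a k ω
  set bad :=
    {ω | F * √(2 * T * log (1 / δ)) < ∑ k ∈ Finset.range T, transitionIncrement p f s a k ω}
  have hbad : μ bad ≤ ENNReal.ofReal δ := measure_sum_gt_le_of_condExp_eq_zero
    (measurable_transitionIncrement p f hs_meas ha_meas) hbdd
    (condExp_transitionIncrement_eq_zero hs_meas ha_meas htrans f) T hδ0
  calc ENNReal.ofReal (1 - δ) = 1 - ENNReal.ofReal δ := by
        rw [ENNReal.ofReal_sub _ hδ0.le, ENNReal.ofReal_one]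
    _ ≤ 1 - μ bad := tsub_le_tsub_left hbad 1
    _ ≤ μ badᶜ := tsub_le_iff_left.2 (measure_univ (μ := μ) ▸ measure_univ_le_add_compl bad)
    _ ≤ _ := measure_mono fun ω hω => by
        have hlast := Finset.apply_mem_Icc_inf'_sup' f (s (T + 1) ω)
        have hfirst := Finset.apply_mem_Icc_inf'_sup' f (s 1 ω)
        have hend := (abs_le.mp (abs_sub_le_of_le_of_le hlast.1 hlast.2 hfirst.1 hfirst.2)).2
        simp only [bad, Set.mem_compl_iff, Set.mem_ofPred_eq, not_lt] at hω ⊢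
        rw [sum_Icc_sub_eq_sum_transitionIncrement_add]
        linarith

/-- Azuma–Hoeffding applied to the telescoping transition terms: for an adapted
state-action process with next-state conditional distribution `p(s_τ, a_τ, ·)`,
with probability at least `1 − δ`,
`Σ_{τ=1}^T ( Σ_{s'} p(s_τ,a_τ,s')·f(s') − f(s_τ) ) ≤ F·√(2T·log(1/δ)) + F`. -/
theorem transition_martingale_bound
    {Ω : Type*} {m0 : MeasurableSpace Ω} (μ : Measure Ω) [IsProbabilityMeasure μ]
    (ℱ : Filtration ℕ m0)
    {S A : Type*} [Fintype S] [Nonempty S] [Fintype A] [Nonempty A]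
    (p : S → A → S → ℝ)
    (hp0 : ∀ s a s', 0 ≤ p s a s') (hp1 : ∀ s a, ∑ s', p s a s' = 1)
    (s : ℕ → Ω → S) (a : ℕ → Ω → A)
    (hs_meas : ∀ τ, 1 ≤ τ → @Measurable Ω S (ℱ τ) ⊤ (s τ))
    (ha_meas : ∀ τ, 1 ≤ τ → @Measurable Ω A (ℱ τ) ⊤ (a τ))
    (htrans : ∀ τ, 1 ≤ τ → ∀ s' : S,
      μ[Set.indicator {ω | s (τ + 1) ω = s'} (1 : Ω → ℝ) | ℱ τ]
        =ᵐ[μ] fun ω => p (s τ ω) (a τ ω) s')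
    (f : S → ℝ) (F : ℝ)
    (hF : F = Finset.univ.sup' Finset.univ_nonempty f
        - Finset.univ.inf' Finset.univ_nonempty f)
    (T : ℕ) (hT : 1 ≤ T) (δ : ℝ) (hδ0 : 0 < δ) (hδ1 : δ < 1) :
    ENNReal.ofReal (1 - δ) ≤
      μ {ω | ∑ τ ∈ Finset.Icc 1 T,
          ((∑ s', p (s τ ω) (a τ ω) s' * f s') - f (s τ ω)) ≤
        F * Real.sqrt (2 * T * Real.log (1 / δ)) + F} :=
  transition_martingale_bound_general μ ℱ p hp0 hp1 s a hs_meas ha_meas htrans f F hF T δ hδ0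
end

section
/- Let P be a finite set with |P| = m ≥ 1 (the set of state-action pairs), and let K ≥ 1 and T be natural numbers with T ≥ m. For k = 1, …, K let v_k : P → ℕ (the visit counts in episode k), and define N_1(q) := 0 and N_{k+1}(q) := N_k(q) + v_k(q) for each q ∈ P. Suppose that for every k ∈ {1, …, K−1} there exists q ∈ P with v_k(q) ≥ max(1, N_k(q)), and that Σ_{k=1}^{K} Σ_{q∈P} v_k(q) ≤ T. Then K ≤ m · log₂( 8T / m ). -/
/-- Bound on the number of episodes of UCRL: with `m` state-action pairs, episode visit
counts `v_k`, cumulative counts `N_k`, the doubling termination criterion for each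
completed episode, and at most `T` total steps, the number of episodes `K` satisfies
`K ≤ m · log₂(8T/m)`. -/
theorem number_of_episodes_bound
    {P : Type*} [Fintype P] (m : ℕ) (hm : m = Fintype.card P) (hm1 : 1 ≤ m)
    (K T : ℕ) (hK : 1 ≤ K) (hT : m ≤ T)
    (v : ℕ → P → ℕ) (N : ℕ → P → ℕ)
    (hN1 : ∀ q, N 1 q = 0)
    (hNrec : ∀ k q, N (k + 1) q = N k q + v k q)
    (hterm : ∀ k ∈ Finset.Icc 1 (K - 1), ∃ q, max 1 (N k q) ≤ v k q)
    (htotal : ∑ k ∈ Finset.Icc 1 K, ∑ q, v k q ≤ T) :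
    (K : ℝ) ≤ m * Real.logb 2 (8 * T / m) := by
  classical
  set S : P → Finset ℕ := fun q =>
    (Finset.Icc 1 (K - 1)).filter (fun k => max 1 (N k q) ≤ v k q) with hS
  -- the doubling invariant
  have hinv : ∀ q i,
      2 ^ (((Finset.Icc 1 i).filter (fun k => max 1 (N k q) ≤ v k q)).card)
        ≤ 2 * N (i + 1) q + 1 := by
    intro q i
    induction i with
    | zero => simp
    | succ i ih =>
      have hins : Finset.Icc 1 (i + 1) = insert (i + 1) (Finset.Icc 1 i) := by
        ext k; simp [Finset.mem_Icc]; omega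
      rw [hins, Finset.filter_insert, hNrec (i + 1) q]
      by_cases hp : max 1 (N (i + 1) q) ≤ v (i + 1) q
      · rw [if_pos hp, Finset.card_insert_of_notMem (by simp [Finset.mem_Icc])]
        have hv1 : 1 ≤ v (i + 1) q := le_trans (le_max_left _ _) hp
        have hvN : N (i + 1) q ≤ v (i + 1) q := le_trans (le_max_right _ _) hp
        set c := ((Finset.Icc 1 i).filter (fun k => max 1 (N k q) ≤ v k q)).card with hc
        clear_value c
        rcases Nat.eq_zero_or_pos c with h0 | h1
        · subst h0; simp only [zero_add, pow_one]; omega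
        · obtain ⟨d, rfl⟩ := Nat.exists_eq_add_of_le h1
          have hd : 1 ≤ 2 ^ d := Nat.one_le_two_pow
          have e1 : (2 : ℕ) ^ (1 + d) = 2 * 2 ^ d := by rw [pow_add, pow_one]
          have e2 : (2 : ℕ) ^ (1 + d + 1) = 2 * (2 * 2 ^ d) := by rw [pow_succ, e1]; ring
          rw [e1] at ih
          rw [e2]
          omega
      · rw [if_neg hp]
        omega
  -- total visits
  have hNsum : ∀ i q, N (i + 1) q = ∑ k ∈ Finset.Icc 1 i, v k q := by
    intro i q
    induction i with
    | zero => simpa using hN1 q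
    | succ i ih =>
      have hins : Finset.Icc 1 (i + 1) = insert (i + 1) (Finset.Icc 1 i) := by
        ext k; simp [Finset.mem_Icc]; omega
      rw [hNrec (i + 1) q, ih, hins, Finset.sum_insert (by simp [Finset.mem_Icc])]
      ring
  have htot : ∑ q, (N (K + 1) q : ℕ) ≤ T := by
    calc ∑ q, N (K + 1) q = ∑ q, ∑ k ∈ Finset.Icc 1 K, v k q := by
          simp [hNsum]
      _ = ∑ k ∈ Finset.Icc 1 K, ∑ q, v k q := Finset.sum_comm
      _ ≤ T := htotal
  -- counting episodes
  have hcount : K ≤ (∑ q, (S q).card) + 1 := by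
    have hsub : Finset.Icc 1 (K - 1) ⊆ Finset.univ.biUnion S := by
      intro k hk
      obtain ⟨q, hq⟩ := hterm k hk
      exact Finset.mem_biUnion.2 ⟨q, Finset.mem_univ q, Finset.mem_filter.2 ⟨hk, hq⟩⟩
    have h1 := (Finset.card_le_card hsub).trans Finset.card_biUnion_le
    rw [Nat.card_Icc] at h1
    omega
  -- per-pair bound at the end
  have hper : ∀ q, 2 ^ ((S q).card) ≤ 2 * N (K + 1) q + 1 := by
    intro q
    have h1 := hinv q (K - 1)
    have hK1 : K - 1 + 1 = K := by omega
    rw [hK1] at h1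
    have h2 : N K q ≤ N (K + 1) q := by rw [hNrec]; omega
    calc 2 ^ ((S q).card) ≤ 2 * N K q + 1 := h1
      _ ≤ 2 * N (K + 1) q + 1 := by omega
  -- move to the reals
  set x : P → ℝ := fun q => 2 * (N (K + 1) q : ℝ) + 1 with hx
  have hxpos : ∀ q, 0 < x q := by
    intro q; have : (0 : ℝ) ≤ (N (K + 1) q : ℝ) := Nat.cast_nonneg _
    simp only [hx]; linarith
  have hcle : ∀ q, ((S q).card : ℝ) ≤ Real.logb 2 (x q) := by
    intro q
    rw [Real.le_logb_iff_rpow_le one_lt_two (hxpos q)]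
    rw [Real.rpow_natCast]
    have := hper q
    calc (2 : ℝ) ^ ((S q).card) = ((2 ^ ((S q).card) : ℕ) : ℝ) := by push_cast; ring
      _ ≤ ((2 * N (K + 1) q + 1 : ℕ) : ℝ) := by exact_mod_cast this
      _ = x q := by push_cast; ring
  have hmpos : (0 : ℝ) < m := by exact_mod_cast hm1
  have hTpos : (0 : ℝ) < T := by have : 1 ≤ T := le_trans hm1 hT; exact_mod_cast this
  -- Jensen
  have hcard : (Finset.univ : Finset P).card = m := by rw [hm]; rfl
  have hjensen : ∑ q, Real.log (x q) ≤ m * Real.log ((∑ q, x q) / m) := by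
    have h := strictConcaveOn_log_Ioi.concaveOn.le_map_sum
      (t := (Finset.univ : Finset P)) (w := fun _ => (m : ℝ)⁻¹) (p := x)
      (fun i _ => by positivity)
      (by rw [Finset.sum_const, hcard, nsmul_eq_mul, mul_inv_cancel₀ (ne_of_gt hmpos)])
      (fun i _ => Set.mem_Ioi.mpr (hxpos i))
    simp only [smul_eq_mul] at h
    have h2 : (m : ℝ)⁻¹ * ∑ q, Real.log (x q) ≤ Real.log ((m : ℝ)⁻¹ * ∑ q, x q) := by
      rw [Finset.mul_sum, Finset.mul_sum]
      exact h
    have h3 := mul_le_mul_of_nonneg_left h2 (le_of_lt hmpos)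
    rw [← mul_assoc, mul_inv_cancel₀ (ne_of_gt hmpos), one_mul] at h3
    calc ∑ q, Real.log (x q) ≤ m * Real.log ((m : ℝ)⁻¹ * ∑ q, x q) := h3
      _ = m * Real.log ((∑ q, x q) / m) := by rw [inv_mul_eq_div]
  -- sums of x
  have hxsum : ∑ q, x q ≤ 3 * T := by
    have h1 : ∑ q, x q = 2 * (∑ q, (N (K + 1) q : ℝ)) + m := by
      simp only [hx]
      rw [Finset.sum_add_distrib, ← Finset.mul_sum]
      simp [hcard, Finset.sum_const]
    have h2 : (∑ q, (N (K + 1) q : ℝ)) ≤ T := by exact_mod_cast htot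
    have h3 : (m : ℝ) ≤ T := by exact_mod_cast hT
    rw [h1]; linarith
  have hlog2 : (0 : ℝ) < Real.log 2 := Real.log_pos one_lt_two
  -- chain in the reals
  haveI : Nonempty P := Fintype.card_pos_iff.mp (by omega)
  have hxsumpos : (0 : ℝ) < ∑ q, x q :=
    Finset.sum_pos (fun q _ => hxpos q) Finset.univ_nonempty
  have hmono : Real.logb 2 ((∑ q, x q) / m) ≤ Real.logb 2 (3 * T / m) := by
    apply Real.logb_le_logb_of_le one_lt_two (by positivity)
    gcongr
  have hfinal : (K : ℝ) ≤ 1 + ∑ q, ((S q).card : ℝ) := by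
    have h := hcount
    have : (K : ℝ) ≤ ((∑ q, (S q).card : ℕ) : ℝ) + 1 := by exact_mod_cast h
    push_cast at this
    linarith
  have hsumlogb : ∑ q, Real.logb 2 (x q) ≤ m * Real.logb 2 ((∑ q, x q) / m) := by
    simp only [Real.logb]
    rw [← Finset.sum_div, ← mul_div_assoc]
    exact div_le_div_of_nonneg_right hjensen hlog2.le
  have hm1' : (1 : ℝ) ≤ m := by exact_mod_cast hm1
  have h83 : (1 : ℝ) ≤ Real.logb 2 (8 / 3) := by
    have h := Real.logb_le_logb_of_le one_lt_two (x := 2) (y := 8 / 3) two_pos (by norm_num)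
    rwa [Real.logb_self_eq_one one_lt_two] at h
  have hsplit : Real.logb 2 (8 * T / m) = Real.logb 2 (3 * T / m) + Real.logb 2 (8 / 3) := by
    rw [← Real.logb_mul (by positivity) (by norm_num)]
    congr 1
    field_simp
  calc (K : ℝ) ≤ 1 + ∑ q, ((S q).card : ℝ) := hfinal
    _ ≤ 1 + ∑ q, Real.logb 2 (x q) := by
        have := Finset.sum_le_sum (fun q (_ : q ∈ Finset.univ) => hcle q)
        linarith
    _ ≤ 1 + m * Real.logb 2 ((∑ q, x q) / m) := by linarith
    _ ≤ 1 + m * Real.logb 2 (3 * T / m) := by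
        have := mul_le_mul_of_nonneg_left hmono hmpos.le
        linarith
    _ ≤ m * Real.logb 2 (8 * T / m) := by
        rw [hsplit, mul_add]
        have := mul_le_mul_of_nonneg_left h83 hmpos.le
        linarith
end

section
/- Let z_1, …, z_n be nonnegative real numbers satisfying z_k ≤ max(1, Σ_{i=1}^{k−1} z_i) for every k = 1, …, n (with the empty sum equal to 0). Then Σ_{k=1}^{n} z_k / √( max(1, Σ_{i=1}^{k−1} z_i) ) ≤ (√2 + 1) · √( max(1, Σ_{i=1}^{n} z_i) ). -/
noncomputable def gUCRL (t : ℝ) : ℝ :=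
  if t ≤ 1 then t else (Real.sqrt 2 + 1) * Real.sqrt t - Real.sqrt 2

lemma gUCRL_step (T zc : ℝ) (hT : 0 ≤ T) (hzc : 0 ≤ zc) (hle : zc ≤ max 1 T) :
    gUCRL T + zc / Real.sqrt (max 1 T) ≤ gUCRL (T + zc) := by
  have h2 : (Real.sqrt 2) ^ 2 = 2 := Real.sq_sqrt (by norm_num)
  rcases le_or_gt T 1 with h1 | h1
  · have hmax : max 1 T = 1 := max_eq_left h1
    rw [hmax] at hle ⊢
    simp only [Real.sqrt_one, div_one]
    rw [gUCRL, if_pos h1]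
    rcases le_or_gt (T + zc) 1 with hb | hb
    · rw [gUCRL, if_pos hb]
    · rw [gUCRL, if_neg (not_le.mpr hb)]
      set s := Real.sqrt (T + zc) with hs
      have hs2 : s ^ 2 = T + zc := Real.sq_sqrt (by linarith)
      have hs1 : 1 ≤ s := by nlinarith [Real.sqrt_nonneg (T + zc)]
      have hs2' : s ≤ Real.sqrt 2 := by
        rw [hs, show (2:ℝ) = Real.sqrt 2 ^ 2 from h2.symm, Real.sqrt_sq (Real.sqrt_nonneg 2)]
          at *
        exact Real.sqrt_le_sqrt (by nlinarith)
      nlinarith [mul_nonneg (sub_nonneg.2 hs1) (sub_nonneg.2 hs2')]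
  · have hmax : max 1 T = T := max_eq_right h1.le
    rw [hmax] at hle ⊢
    rw [gUCRL, if_neg (not_le.mpr h1), gUCRL,
      if_neg (not_le.mpr (by linarith : (1:ℝ) < T + zc))]
    set a := Real.sqrt T with ha
    set b := Real.sqrt (T + zc) with hb
    have ha2 : a ^ 2 = T := Real.sq_sqrt hT
    have hb2 : b ^ 2 = T + zc := Real.sq_sqrt (by linarith)
    have ha1 : 1 ≤ a := by nlinarith [Real.sqrt_nonneg T]
    have hab : a ≤ b := Real.sqrt_le_sqrt (by linarith)
    have hbca : b ≤ Real.sqrt 2 * a := by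
      rw [hb, ha, ← Real.sqrt_mul (by norm_num : (0:ℝ) ≤ 2)]
      exact Real.sqrt_le_sqrt (by linarith)
    have hapos : 0 < a := by linarith
    have key : zc / a ≤ (Real.sqrt 2 + 1) * (b - a) := by
      rw [div_le_iff₀ hapos]
      nlinarith [mul_nonneg (sub_nonneg.2 hab)
        (sub_nonneg.2 (by nlinarith : b + a ≤ (Real.sqrt 2 + 1) * a))]
    linarith

lemma gUCRL_final (T : ℝ) (hT : 0 ≤ T) :
    gUCRL T ≤ (Real.sqrt 2 + 1) * Real.sqrt (max 1 T) := by
  have h2 : 0 ≤ Real.sqrt 2 := Real.sqrt_nonneg 2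
  rcases le_or_gt T 1 with h1 | h1
  · rw [gUCRL, if_pos h1, max_eq_left h1, Real.sqrt_one]
    linarith
  · rw [gUCRL, if_neg (not_le.mpr h1), max_eq_right h1.le]
    linarith

lemma gUCRL_main (z : ℕ → ℝ) : ∀ n : ℕ,
    (∀ k ∈ Finset.Icc 1 n, 0 ≤ z k) →
    (∀ k ∈ Finset.Icc 1 n, z k ≤ max 1 (∑ i ∈ Finset.Ico 1 k, z i)) →
    (∑ k ∈ Finset.Icc 1 n, z k / Real.sqrt (max 1 (∑ i ∈ Finset.Ico 1 k, z i))) ≤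
      gUCRL (∑ i ∈ Finset.Icc 1 n, z i) := by
  intro n
  induction n with
  | zero => simp [gUCRL]
  | succ n ih =>
    intro hz0 hz
    have hsub : Finset.Icc 1 n ⊆ Finset.Icc 1 (n + 1) :=
      Finset.Icc_subset_Icc_right (by omega)
    have ih' := ih (fun k hk => hz0 k (hsub hk)) (fun k hk => hz k (hsub hk))
    rw [Finset.sum_Icc_succ_top (by omega : 1 ≤ n + 1),
        Finset.sum_Icc_succ_top (by omega : 1 ≤ n + 1),
        Finset.Ico_add_one_right_eq_Icc]
    have hT0 : 0 ≤ ∑ i ∈ Finset.Icc 1 n, z i :=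
      Finset.sum_nonneg (fun i hi => hz0 i (hsub hi))
    have hmem : n + 1 ∈ Finset.Icc 1 (n + 1) := Finset.mem_Icc.mpr (by omega)
    have hle := hz (n + 1) hmem
    rw [Finset.Ico_add_one_right_eq_Icc] at hle
    have := gUCRL_step (∑ i ∈ Finset.Icc 1 n, z i) (z (n + 1)) hT0 (hz0 _ hmem) hle
    linarith

/-- Scalar UCRL counting lemma: if each nonnegative increment `z_k` is at most the
current cumulated total `max(1, Σ_{i<k} z_i)`, then
`Σ_k z_k / √(max(1, Σ_{i<k} z_i)) ≤ (√2 + 1)·√(max(1, Σ_{i≤n} z_i))`. -/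
theorem sum_div_sqrt_max_one_le
    (n : ℕ) (z : ℕ → ℝ)
    (hz0 : ∀ k ∈ Finset.Icc 1 n, 0 ≤ z k)
    (hz : ∀ k ∈ Finset.Icc 1 n, z k ≤ max 1 (∑ i ∈ Finset.Ico 1 k, z i)) :
    (∑ k ∈ Finset.Icc 1 n, z k / Real.sqrt (max 1 (∑ i ∈ Finset.Ico 1 k, z i))) ≤
      (Real.sqrt 2 + 1) * Real.sqrt (max 1 (∑ i ∈ Finset.Icc 1 n, z i)) := by
  exact le_trans (gUCRL_main z n hz0 hz)
    (gUCRL_final _ (Finset.sum_nonneg (fun i hi => hz0 i hi)))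
end

section
/- Let P be a finite set with |P| = m ≥ 1 (the set of state-action pairs), K ≥ 1 a natural number, and T ≥ 0 a real number. For k = 1, …, K let v_k : P → ℝ be nonnegative, define N_1(q) := 0 and N_{k+1}(q) := N_k(q) + v_k(q), and assume v_k(q) ≤ max(1, N_k(q)) for all k and all q ∈ P, as well as Σ_{k=1}^{K} Σ_{q∈P} v_k(q) ≤ T. Then Σ_{q∈P} Σ_{k=1}^{K} v_k(q) / √( max(1, N_k(q)) ) ≤ (√2 + 1) · √( m · T ). -/
private lemma ucrl_step (N x : ℝ) (hN : 0 ≤ N) (hx : 0 ≤ x) (hle : x ≤ max 1 N) :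
    x / Real.sqrt (max 1 N) ≤ (Real.sqrt 2 + 1) * (Real.sqrt (N + x) - Real.sqrt N) := by
  set M := max 1 N with hM
  have hM1 : (1:ℝ) ≤ M := le_max_left _ _
  have hM0 : 0 < M := by linarith
  have hsM : 0 < Real.sqrt M := Real.sqrt_pos.2 hM0
  rw [div_le_iff₀ hsM]
  have key : Real.sqrt (N + x) + Real.sqrt N ≤ (Real.sqrt 2 + 1) * Real.sqrt M := by
    have h1 : Real.sqrt (N + x) ≤ Real.sqrt 2 * Real.sqrt M := by
      rw [← Real.sqrt_mul (by norm_num : (0:ℝ) ≤ 2)]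
      exact Real.sqrt_le_sqrt (by have := le_max_right 1 N; linarith)
    have h2 : Real.sqrt N ≤ Real.sqrt M := Real.sqrt_le_sqrt (le_max_right 1 N)
    linarith [h1, h2]
  have hdiff : 0 ≤ Real.sqrt (N + x) - Real.sqrt N :=
    sub_nonneg.2 (Real.sqrt_le_sqrt (by linarith))
  have hprod : (Real.sqrt (N + x) - Real.sqrt N) * (Real.sqrt (N + x) + Real.sqrt N) = x := by
    have a := Real.sq_sqrt (by linarith : (0:ℝ) ≤ N + x)
    have b := Real.sq_sqrt hN
    ring_nf
    nlinarith [a, b]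
  calc x = (Real.sqrt (N + x) - Real.sqrt N) * (Real.sqrt (N + x) + Real.sqrt N) := hprod.symm
    _ ≤ (Real.sqrt (N + x) - Real.sqrt N) * ((Real.sqrt 2 + 1) * Real.sqrt M) :=
        mul_le_mul_of_nonneg_left key hdiff
    _ = (Real.sqrt 2 + 1) * (Real.sqrt (N + x) - Real.sqrt N) * Real.sqrt M := by ring

/-- UCRL counting lemma: with `m` state-action pairs, visit counts `v_k(q)` per episode,
prior counts `N_k(q)`, `v_k(q) ≤ max(1, N_k(q))`, and total count at most `T`,
`Σ_q Σ_k v_k(q)/√(max(1, N_k(q))) ≤ (√2 + 1)·√(m·T)`. -/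
theorem sum_visits_div_sqrt_counts_le
    {P : Type*} [Fintype P] (m : ℕ) (hm : m = Fintype.card P) (hm1 : 1 ≤ m)
    (K : ℕ) (hK : 1 ≤ K) (T : ℝ) (hT : 0 ≤ T)
    (v : ℕ → P → ℝ) (N : ℕ → P → ℝ)
    (hv0 : ∀ k ∈ Finset.Icc 1 K, ∀ q, 0 ≤ v k q)
    (hN1 : ∀ q, N 1 q = 0)
    (hNrec : ∀ k q, N (k + 1) q = N k q + v k q)
    (hvle : ∀ k ∈ Finset.Icc 1 K, ∀ q, v k q ≤ max 1 (N k q))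
    (htotal : ∑ k ∈ Finset.Icc 1 K, ∑ q, v k q ≤ T) :
    (∑ q, ∑ k ∈ Finset.Icc 1 K, v k q / Real.sqrt (max 1 (N k q))) ≤
      (Real.sqrt 2 + 1) * Real.sqrt (m * T) := by
  set c := Real.sqrt 2 + 1 with hc
  have hc0 : 0 ≤ c := by positivity
  -- nonnegativity of N
  have hNnn : ∀ q, ∀ n, 1 ≤ n → n ≤ K + 1 → 0 ≤ N n q := by
    intro q n
    induction n with
    | zero => omega
    | succ k ih =>
      intro _ hk
      rcases Nat.eq_or_lt_of_le (Nat.one_le_iff_ne_zero.mpr (by omega) : 1 ≤ k + 1) with h | h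
      · rw [← h, hN1]
      · have hk1 : 1 ≤ k := by omega
        have := ih hk1 (by omega)
        rw [hNrec]
        have hvk : 0 ≤ v k q := hv0 k (Finset.mem_Icc.2 ⟨hk1, by omega⟩) q
        linarith
  -- per-q bound by induction
  have perq : ∀ n ≤ K, ∀ q,
      (∑ k ∈ Finset.Icc 1 n, v k q / Real.sqrt (max 1 (N k q))) ≤ c * Real.sqrt (N (n + 1) q) := by
    intro n
    induction n with
    | zero =>
      intro _ q; simp
      positivity
    | succ n ih =>
      intro hn q
      rw [Finset.sum_Icc_succ_top (by omega : 1 ≤ n + 1)]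
      have hmem : n + 1 ∈ Finset.Icc 1 K := Finset.mem_Icc.2 ⟨by omega, hn⟩
      have hNn : 0 ≤ N (n + 1) q := hNnn q (n + 1) (by omega) (by omega)
      have hstep := ucrl_step (N (n + 1) q) (v (n + 1) q) hNn (hv0 _ hmem q) (hvle _ hmem q)
      have hrec : N (n + 2) q = N (n + 1) q + v (n + 1) q := hNrec (n + 1) q
      have hih := ih (by omega) q
      rw [hrec]
      calc _ ≤ c * Real.sqrt (N (n + 1) q) + c * (Real.sqrt (N (n + 1) q + v (n + 1) q) - Real.sqrt (N (n + 1) q)) := by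
            exact add_le_add hih hstep
        _ = c * Real.sqrt (N (n + 1) q + v (n + 1) q) := by ring
  -- define S q = N (K+1) q
  have hS : ∀ q, ∀ n : ℕ, N (n + 1) q = ∑ k ∈ Finset.Icc 1 n, v k q := by
    intro q n
    induction n with
    | zero => simp [hN1]
    | succ n ih =>
      rw [Finset.sum_Icc_succ_top (by omega : 1 ≤ n + 1), ← ih, hNrec]
  have hSnn : ∀ q, 0 ≤ N (K + 1) q := fun q => hNnn q (K + 1) (by omega) le_rfl
  have step1 : (∑ q, ∑ k ∈ Finset.Icc 1 K, v k q / Real.sqrt (max 1 (N k q))) ≤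
      c * ∑ q, Real.sqrt (N (K + 1) q) := by
    rw [Finset.mul_sum]
    exact Finset.sum_le_sum fun q _ => perq K le_rfl q
  -- Cauchy-Schwarz: Σ √S_q ≤ √(m * Σ S_q)
  have hCS : (∑ q, Real.sqrt (N (K + 1) q)) ≤ Real.sqrt (m * ∑ q, N (K + 1) q) := by
    have h := sq_sum_le_card_mul_sum_sq (s := (Finset.univ : Finset P))
      (f := fun q => Real.sqrt (N (K + 1) q))
    rw [← Real.sqrt_sq (by positivity : (0:ℝ) ≤ ∑ q, Real.sqrt (N (K + 1) q))]
    apply Real.sqrt_le_sqrt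
    calc (∑ q, Real.sqrt (N (K + 1) q)) ^ 2
        ≤ (Finset.univ : Finset P).card * ∑ q, Real.sqrt (N (K + 1) q) ^ 2 := h
      _ = m * ∑ q, N (K + 1) q := by
          rw [Finset.card_univ, ← hm]
          congr 1
          exact Finset.sum_congr rfl fun q _ => Real.sq_sqrt (hSnn q)
  have hsum : (∑ q, N (K + 1) q) ≤ T := by
    calc (∑ q, N (K + 1) q) = ∑ k ∈ Finset.Icc 1 K, ∑ q, v k q := by
          rw [Finset.sum_comm]
          exact Finset.sum_congr rfl fun q _ => hS q K
      _ ≤ T := htotal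
  have hfin : Real.sqrt (m * ∑ q, N (K + 1) q) ≤ Real.sqrt (m * T) := by
    apply Real.sqrt_le_sqrt
    have : (0:ℝ) ≤ m := Nat.cast_nonneg m
    nlinarith
  calc (∑ q, ∑ k ∈ Finset.Icc 1 K, v k q / Real.sqrt (max 1 (N k q)))
      ≤ c * ∑ q, Real.sqrt (N (K + 1) q) := step1
    _ ≤ c * Real.sqrt (m * T) := by
        apply mul_le_mul_of_nonneg_left _ hc0
        exact hCS.trans hfin
end
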